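/- For the component Q^{+-}(m,n,t): all three x_i are reflectable at v and isotropic, the spine consists of exactly four vertices, Sp(v) = {v, v_1, v_2, v_3} where v_i := r_{x_i}(v), the set of simple roots at v_i is Sigma_{v_i} = {-beta_i} union {alpha_j : j != i}, and Sigma_pr = pi = {alpha_1, alpha_2, alpha_3}. -/

import Mathlib

open scoped ComplexOrder

attribute [local instance] Classical.propDecidable

namespace KMS

noncomputable section

variable (X : Type*) [Fintype X] (H : Type*) [AddCommGroup H] [Module ℂ H]

/-- A root datum: maps `a : X → h`, `b : X → h*`, parity `p`, with `a`, `b`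
linearly independent families (the "injectivity" of the induced maps from the span of `X`). -/
structure RootDatum where
  a : X → H
  b : X → Module.Dual ℂ H
  p : X → ZMod 2
  lin_indep_a : LinearIndependent ℂ a
  lin_indep_b : LinearIndependent ℂ b

variable {X H}

/-- The Cartan matrix entry `a^v_{xy} = ⟨a_v(x), b_v(y)⟩`. -/
def cartan (v : RootDatum X H) (x y : X) : ℂ := v.b y (v.a x)

/-- `x` is reflectable at `v`. -/
def Reflectable (v : RootDatum X H) (x : X) : Prop :=
  (cartan v x x = 0 ∧ v.p x = 1) ∨
  (cartan v x x ≠ 0 ∧ v.p x = 0 ∧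
    ∀ y, y ≠ x → ∃ n : ℕ, 2 * cartan v x y / cartan v x x = -(n : ℂ)) ∨
  (cartan v x x ≠ 0 ∧ v.p x = 1 ∧
    ∀ y, y ≠ x → ∃ n : ℕ, cartan v x y / cartan v x x = -(n : ℂ))

/-- The anisotropic reflexion `r_x : v → v'`. -/
def IsAnisoReflexion (x : X) (v v' : RootDatum X H) : Prop :=
  Reflectable v x ∧ cartan v x x ≠ 0 ∧ v'.p = v.p ∧
  (∀ y, v'.a y = v.a y - (2 * cartan v y x / cartan v x x) • v.a x) ∧
  (∀ y, v'.b y = v.b y - (2 * cartan v x y / cartan v x x) • v.b x)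

/-- The isotropic reflexion `r_x : v → v'`. -/
def IsIsoReflexion (x : X) (v v' : RootDatum X H) : Prop :=
  Reflectable v x ∧ cartan v x x = 0 ∧
  v'.a x = -v.a x ∧ v'.b x = -v.b x ∧ v'.p x = v.p x ∧
  ∀ y, y ≠ x →
    (cartan v x y = 0 → v'.a y = v.a y ∧ v'.b y = v.b y ∧ v'.p y = v.p y) ∧
    (cartan v x y ≠ 0 →
      v'.a y = v.a y + (cartan v y x / cartan v x y) • v.a x ∧
      v'.b y = v.b y + v.b x ∧ v'.p y = v.p y + 1)

/-- A reflexion is either anisotropic or isotropic. -/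
def IsReflexion (x : X) (v v' : RootDatum X H) : Prop :=
  IsAnisoReflexion x v v' ∨ IsIsoReflexion x v v'

/-- A path of reflexions from `v` to `u`, recorded by the ordered list of its marks. -/
inductive IsPath : RootDatum X H → List X → RootDatum X H → Prop
  | nil (v : RootDatum X H) : IsPath v [] v
  | cons {v v' u : RootDatum X H} {x : X} {ms : List X} :
      IsReflexion x v v' → IsPath v' ms u → IsPath v (x :: ms) u

/-- A path of isotropic reflexions from `v` to `u`. -/
inductive IsIsoPath : RootDatum X H → List X → RootDatum X H → Prop
  | nil (v : RootDatum X H) : IsIsoPath v [] v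
  | cons {v v' u : RootDatum X H} {x : X} {ms : List X} :
      IsIsoReflexion x v v' → IsIsoPath v' ms u → IsIsoPath v (x :: ms) u

/-- The skeleton `Sk(v)`. -/
def Skeleton (v : RootDatum X H) : Set (RootDatum X H) := {u | ∃ ms : List X, IsPath v ms u}

/-- The spine `Sp(v)`. -/
def Spine (v : RootDatum X H) : Set (RootDatum X H) := {u | ∃ ms : List X, IsIsoPath v ms u}

/-- Admissibility of the component of `v`. -/
def Admissible (v : RootDatum X H) : Prop :=
  ∀ u ∈ Skeleton v, ∀ x, Reflectable u x → ∀ y, cartan u x y = 0 → cartan u y x = 0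

/-- Full reflectability of the component of `v`. -/
def FullyReflectable (v : RootDatum X H) : Prop :=
  ∀ u ∈ Skeleton v, ∀ x, Reflectable u x

/-- Anisotropic real roots. -/
def DeltaAn (v : RootDatum X H) : Set (Module.Dual ℂ H) :=
  {α | ∃ u x, u ∈ Skeleton v ∧ Reflectable u x ∧ cartan u x x ≠ 0 ∧ u.b x = α}

/-- Isotropic real roots. -/
def DeltaIs (v : RootDatum X H) : Set (Module.Dual ℂ H) :=
  {α | ∃ u x, u ∈ Skeleton v ∧ Reflectable u x ∧ cartan u x x = 0 ∧ u.b x = α}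

/-- The coroot `α^∨ = (2 / a^u_{xx}) a_u(x)` of an anisotropic real root
(independent of the choice of presentation). -/
def coroot (v : RootDatum X H) (α : Module.Dual ℂ H) : H :=
  if h : ∃ u x, u ∈ Skeleton v ∧ Reflectable u x ∧ cartan u x x ≠ 0 ∧ u.b x = α then
    (2 / cartan h.choose h.choose_spec.choose h.choose_spec.choose) •
      h.choose.a h.choose_spec.choose
  else 0

/-- The parity `p(α)` of an anisotropic real root. -/
def rootParity (v : RootDatum X H) (α : Module.Dual ℂ H) : ZMod 2 :=
  if h : ∃ u x, u ∈ Skeleton v ∧ Reflectable u x ∧ cartan u x x ≠ 0 ∧ u.b x = α then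
    h.choose.p h.choose_spec.choose
  else 0

/-- Principal roots: anisotropic simple roots at vertices of the spine. -/
def SigmaPr (v : RootDatum X H) : Set (Module.Dual ℂ H) :=
  {α | ∃ u x, u ∈ Spine v ∧ Reflectable u x ∧ cartan u x x ≠ 0 ∧ u.b x = α}

/-- The set `π`: even principal roots together with doubles of odd principal roots. -/
def piSet (v : RootDatum X H) : Set (Module.Dual ℂ H) :=
  {α | α ∈ SigmaPr v ∧ rootParity v α = 0} ∪
  {β | ∃ α ∈ SigmaPr v, rootParity v α = 1 ∧ β = (2 : ℂ) • α}

/-- The coroot of an element of `π` (with `(2α)^∨ = α^∨ / 2` for odd principal `α`). -/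
def piCoroot (v : RootDatum X H) (β : Module.Dual ℂ H) : H :=
  if β ∈ SigmaPr v then coroot v β else (2 : ℂ)⁻¹ • coroot v ((2 : ℂ)⁻¹ • β)

/-- The Weyl group: the subgroup of `GL(h^*)` generated by the reflections
`s_α : λ ↦ λ - ⟨α^∨, λ⟩ α` for `α ∈ Δ_an`. -/
def WeylGroup (v : RootDatum X H) :
    Subgroup (Module.Dual ℂ H ≃ₗ[ℂ] Module.Dual ℂ H) :=
  Subgroup.closure
    {w | ∃ α ∈ DeltaAn v, ∀ lam : Module.Dual ℂ H, w lam = lam - lam (coroot v α) • α}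

/-- `Q^+_u`: nonnegative integral combinations of the simple roots at `u`. -/
def QPlus (u : RootDatum X H) : Set (Module.Dual ℂ H) :=
  {μ | ∃ k : X → ℕ, μ = ∑ x, (k x : ℂ) • u.b x}

/-- `Q_u`: integral combinations of the simple roots at `u`. -/
def QLattice (u : RootDatum X H) : Set (Module.Dual ℂ H) :=
  {μ | ∃ k : X → ℤ, μ = ∑ x, (k x : ℂ) • u.b x}

/-- The convex cone of finite nonnegative real combinations of elements of `S`. -/
def coneR {M : Type*} [AddCommGroup M] [Module ℝ M] (S : Set M) : Set M :=
  {μ | ∃ (T : Finset M) (c : M → ℝ), ↑T ⊆ S ∧ (∀ m, 0 ≤ c m) ∧ μ = ∑ m ∈ T, c m • m}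

/-- The totally positive cone `Q^{++}_ℝ`. -/
def QppR (v : RootDatum X H) : Set (Module.Dual ℂ H) :=
  ⋂ u ∈ Skeleton v, coneR (Set.range u.b)

/-- Indecomposability of a square matrix. -/
def IsIndecMatrix {Y : Type*} [Fintype Y] (A : Y → Y → ℂ) : Prop :=
  Fintype.card Y = 1 ∨
  ∃ (s : ℕ) (e : Fin s ≃ Y), ∀ j : Fin s,
    A (e j) (e ⟨(j.1 + 1) % s, Nat.mod_lt _ j.pos⟩) ≠ 0

/-- Indecomposability of the component of `v`. -/
def IndecComp (v : RootDatum X H) : Prop :=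
  ∀ u ∈ Spine v, IsIndecMatrix (cartan u)

/-- The Cartan matrix at `v` as a matrix. -/
def cartanMatrix (v : RootDatum X H) : Matrix X X ℂ := Matrix.of fun x y => cartan v x y

/-- A Kac-Moody component: fully reflectable, admissible and `dim h = |X| + corank A^v`. -/
def IsKacMoodyComp (v : RootDatum X H) : Prop :=
  FullyReflectable v ∧ Admissible v ∧
  Module.finrank ℂ H = Fintype.card X + (Fintype.card X - (cartanMatrix v).rank)

/-- Type (Aff): the real span of `Q^{++}_ℝ` is one-dimensional. -/
def TypeAff (v : RootDatum X H) : Prop :=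
  Module.finrank ℝ (Submodule.span ℝ (QppR v)) = 1

/-- The set `π_S` of `S`-principal elements. -/
def piS (v : RootDatum X H) : Set (Module.Dual ℂ H) :=
  {α | ∃ u x, u ∈ Spine v ∧
    ((u.p x = 0 ∧ α = u.b x) ∨ (u.p x = 1 ∧ cartan u x x ≠ 0 ∧ α = (2 : ℂ) • u.b x))}

/-- `D`-equivalence of Cartan data. -/
def DEquivTo (u v : RootDatum X H) : Prop :=
  u.p = v.p ∧ ∃ D : X → ℂ, (∀ x, D x ≠ 0) ∧ ∀ x y, cartan u x y = D x * cartan v x y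

/-- `Sk^D(v)`. -/
def SkD (v : RootDatum X H) : Set (RootDatum X H) := {u | u ∈ Skeleton v ∧ DEquivTo u v}

/-- `Sp^D(v)`. -/
def SpD (v : RootDatum X H) : Set (RootDatum X H) := {u | u ∈ Spine v ∧ DEquivTo u v}

/-- `StarRel v u₁ u₂ u₃` says `u₁ * u₂ = u₃`, i.e. `σ^{u₁}(u₂) = u₃`: some path from `v`
ends at `u₂` and its namesake path from `u₁` ends at `u₃`. -/
def StarRel (v u₁ u₂ u₃ : RootDatum X H) : Prop :=
  ∃ ms : List X, IsPath v ms u₂ ∧ IsPath u₁ ms u₃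

/-- `u` is the vertex `w·v` for `w` in the Weyl group. -/
def VertexOf (v : RootDatum X H) (w : Module.Dual ℂ H ≃ₗ[ℂ] Module.Dual ℂ H)
    (u : RootDatum X H) : Prop :=
  u ∈ Skeleton v ∧ ∀ x, u.b x = w (v.b x)

end

/- At `v` every simple root is odd isotropic and no two of them are orthogonal. Hence every
`x` can be reflected, and `r_x v` has simple roots `-β_x` and `β_y + β_x` (`y ≠ x`), the
latter even and anisotropic with `a_{yy} = 2 a_{yx} ≠ 0`. So the only isotropic reflexion at
`r_x v` is `r_x`, an involution, and the spine is the star `{v} ∪ {r_x v}`. The three relations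
between `a, b, c` and `m, n, t` are exactly the integrality conditions making each `y ≠ x`
reflectable at `r_x v`, so the principal roots are the `β_x + β_y = α_z`. They are all even,
because the parity of a real root is determined by its integral coordinates in the simple roots
at `v`; hence `π = Σ_pr`. -/

theorem _root_.LinearIndependent.of_forall_eq_add_smul {ι K M : Type*} [Fintype ι] [Field K]
    [AddCommGroup M] [Module K M] {f g : ι → M} (hf : LinearIndependent K f) (x : ι)
    {t : ι → K} (ht : t x ≠ -1) (hg : ∀ y, g y = f y + t y • f x) :
    LinearIndependent K g := by
  classical
  rw [Fintype.linearIndependent_iff] at hf ⊢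
  intro c hc
  set s := ∑ i, c i * t i
  have hcoeff := hf (c + Pi.single x s) (by
    simp_rw [← hc, hg]
    simp [add_smul, smul_add, Finset.sum_add_distrib, smul_smul, ← Finset.sum_smul, s,
      Pi.single_apply, ite_smul])
  have hne : ∀ i, i ≠ x → c i = 0 := fun i hi => by
    simpa [Pi.single_apply, hi] using hcoeff i
  have hs : s = c x * t x := Finset.sum_eq_single x (fun i _ hi => by simp [hne i hi]) (by simp)
  have hx : c x * (1 + t x) = 0 := by
    have := hcoeff x
    simp only [Pi.add_apply, Pi.single_eq_same, hs] at this
    linear_combination this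
  have h1 : 1 + t x ≠ 0 := fun h => ht (by linear_combination h)
  intro i
  by_cases hi : i = x
  · subst hi; exact (mul_eq_zero.mp hx).resolve_right h1
  · exact hne i hi

attribute [ext] RootDatum

noncomputable section

variable {X : Type*} {H : Type*} [AddCommGroup H] [Module ℂ H]

def isoReflexion [Fintype X] (v : RootDatum X H) (x : X) : RootDatum X H where
  a y := if y = x then -v.a x else if cartan v x y = 0 then v.a y
    else v.a y + (cartan v y x / cartan v x y) • v.a x
  b y := if y = x then -v.b x else if cartan v x y = 0 then v.b y else v.b y + v.b x
  p y := if y = x ∨ cartan v x y = 0 then v.p y else v.p y + 1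
  lin_indep_a := v.lin_indep_a.of_forall_eq_add_smul x (t := fun y => if y = x then -2
      else if cartan v x y = 0 then 0 else cartan v y x / cartan v x y) (by norm_num)
    fun y => by split_ifs with h <;> [(subst h; module); simp; rfl]
  lin_indep_b := v.lin_indep_b.of_forall_eq_add_smul x (t := fun y => if y = x then -2
      else if cartan v x y = 0 then 0 else 1) (by norm_num)
    fun y => by split_ifs with h <;> [(subst h; module); simp; simp]

@[simp]
theorem b_isoReflexion_self [Fintype X] (v : RootDatum X H) (x : X) :
    (isoReflexion v x).b x = -v.b x := by
  simp [isoReflexion]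

end

section IsoReflexion

variable {X : Type*} {H : Type*} [AddCommGroup H] [Module ℂ H] {x y z : X}
  {v v' : RootDatum X H}

theorem Reflectable.p_eq_one (hx : Reflectable v x) (hxx : cartan v x x = 0) : v.p x = 1 := by
  rcases hx with ⟨-, h⟩ | ⟨h, -⟩ | ⟨h, -⟩
  exacts [h, absurd hxx h, absurd hxx h]

theorem isIsoReflexion_isoReflexion [Fintype X] (hx : Reflectable v x)
    (hxx : cartan v x x = 0) : IsIsoReflexion x v (isoReflexion v x) := by
  refine ⟨hx, hxx, by simp [isoReflexion], by simp [isoReflexion], by simp [isoReflexion],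
    fun y hy => ⟨fun h => ?_, fun h => ?_⟩⟩ <;> simp [isoReflexion, hy, h]

namespace IsIsoReflexion

variable (hr : IsIsoReflexion x v v')
include hr

theorem eq_isoReflexion [Fintype X] : v' = isoReflexion v x := by
  obtain ⟨-, -, ha, hb, hp, hy⟩ := hr
  ext y <;> by_cases hyx : y = x <;> simp only [isoReflexion, hyx, ha, hb, hp, if_true,
    if_false, true_or, false_or] <;> by_cases h : cartan v x y = 0 <;> simp [h, hy y hyx]

theorem b_of_cartan_ne_zero (hy : y ≠ x) (h : cartan v x y ≠ 0) : v'.b y = v.b y + v.b x :=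
  ((hr.2.2.2.2.2 y hy).2 h).2.1

theorem p_of_cartan_ne_zero (hy : y ≠ x) (h : cartan v x y ≠ 0) : v'.p y = v.p y + 1 :=
  ((hr.2.2.2.2.2 y hy).2 h).2.2

theorem cartan_self_right (y : X) : cartan v' y x = -cartan v y x := by
  obtain ⟨-, hxx, ha, hb, -, hy⟩ := hr
  unfold cartan at hxx ⊢
  by_cases hyx : y = x
  · subst hyx; simp [ha, hb, hxx]
  by_cases h : cartan v x y = 0
  · simp [hb, ((hy y hyx).1 h).1]
  · simp [hb, ((hy y hyx).2 h).1, hxx]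

theorem cartan_self_left (y : X) : cartan v' x y = -cartan v x y := by
  obtain ⟨-, hxx, ha, hb, -, hy⟩ := hr
  unfold cartan at hxx ⊢
  by_cases hyx : y = x
  · subst hyx; simp [ha, hb, hxx]
  by_cases h : cartan v x y = 0
  · simp [ha, ((hy y hyx).1 h).2.1]
  · simp [ha, ((hy y hyx).2 h).2.1, hxx]

theorem cartan_of_ne (hy : y ≠ x) (hz : z ≠ x) (hxy : cartan v x y ≠ 0)
    (hxz : cartan v x z ≠ 0) :
    cartan v' y z = cartan v y z + cartan v y x + cartan v y x / cartan v x y * cartan v x z := by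
  have hxx := hr.2.1
  simp only [cartan, ((hr.2.2.2.2.2 y hy).2 hxy).1, ((hr.2.2.2.2.2 z hz).2 hxz).2.1] at hxx ⊢
  simp [hxx]
  ring

theorem symm : IsIsoReflexion x v' v := by
  have hxx' : cartan v' x x = 0 := by rw [hr.cartan_self_left, hr.2.1, neg_zero]
  have hp : v'.p x = v.p x := hr.2.2.2.2.1
  have hrow := hr.cartan_self_left
  have hcol := hr.cartan_self_right
  obtain ⟨hx, hxx, ha, hb, -, hy⟩ := hr
  refine ⟨Or.inl ⟨hxx', hp.trans (hx.p_eq_one hxx)⟩, hxx', by simp [ha], by simp [hb],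
    hp.symm, fun y hyx => ⟨fun h => ?_, fun h => ?_⟩⟩
  · rw [hrow, neg_eq_zero] at h
    obtain ⟨ha', hb', hp'⟩ := (hy y hyx).1 h
    exact ⟨ha'.symm, hb'.symm, hp'.symm⟩
  · rw [hrow, neg_ne_zero] at h
    obtain ⟨ha', hb', hp'⟩ := (hy y hyx).2 h
    rw [hcol, hrow, neg_div_neg_eq, ha', hb', hp', ha, hb]
    exact ⟨by module, by abel, by rw [add_assoc, CharTwo.add_self_eq_zero, add_zero]⟩

end IsIsoReflexion

end IsoReflexion

section Spine

variable {X : Type*} {H : Type*} [AddCommGroup H] [Module ℂ H] {x : X} {v v' : RootDatum X H}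

theorem IsIsoReflexion.mem_spine (hr : IsIsoReflexion x v v') : v' ∈ Spine v :=
  ⟨[x], .cons hr (.nil _)⟩

theorem spine_subset_skeleton : Spine v ⊆ Skeleton v := by
  rintro u ⟨ms, hpath⟩
  refine ⟨ms, ?_⟩
  induction hpath with
  | nil => exact .nil _
  | cons hr _ ih => exact .cons (Or.inr hr) ih

theorem spine_subset_of_isIsoReflexion_mem {S : Set (RootDatum X H)} (hv : v ∈ S)
    (hS : ∀ w ∈ S, ∀ x w', IsIsoReflexion x w w' → w' ∈ S) : Spine v ⊆ S := by
  rintro u ⟨ms, hpath⟩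
  induction hpath with
  | nil => exact hv
  | cons hr _ ih => exact ih (hS _ hv _ _ hr)

end Spine

section Parity

variable {X : Type*} {H : Type*} [AddCommGroup H] [Module ℂ H] {x z : X}
  {u v w w' : RootDatum X H}

/-- Integral combinations of the simple roots at `v`, each paired with the parity it carries.
Reflexions do not enlarge it, which makes the parity of a real root a function of the root. -/
def parityLattice (v : RootDatum X H) : Submodule ℤ (Module.Dual ℂ H × ZMod 2) :=
  Submodule.span ℤ (Set.range fun x => (v.b x, v.p x))

theorem mem_parityLattice (v : RootDatum X H) (x : X) : (v.b x, v.p x) ∈ parityLattice v :=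
  Submodule.subset_span ⟨x, rfl⟩

theorem eq_of_mem_parityLattice [Fintype X] {β : Module.Dual ℂ H} {q q' : ZMod 2}
    (h : (β, q) ∈ parityLattice v) (h' : (β, q') ∈ parityLattice v) : q = q' := by
  obtain ⟨k, hk⟩ := (Submodule.mem_span_range_iff_exists_fun ℤ).mp (sub_mem h h')
  have hb : ∑ i, k i • v.b i = 0 := by simpa [Prod.fst_sum] using congr_arg Prod.fst hk
  have hk0 := Fintype.linearIndependent_iff.mp (v.lin_indep_b.restrict_scalars' ℤ) k hb
  simpa [hk0, sub_eq_zero, eq_comm] using congr_arg Prod.snd hk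

theorem Reflectable.exists_int_of_cartan_ne_zero (hz : Reflectable w z)
    (hzz : cartan w z z ≠ 0) (y : X) :
    ∃ d : ℤ, 2 * cartan w z y / cartan w z z = d ∧ (d : ZMod 2) * w.p z = 0 := by
  by_cases hyz : y = z
  · subst hyz
    exact ⟨2, by field_simp; norm_num, by rw [show ((2 : ℤ) : ZMod 2) = 0 from rfl, zero_mul]⟩
  rcases hz with ⟨h, -⟩ | ⟨-, hp, hint⟩ | ⟨-, -, hint⟩
  · exact absurd h hzz
  · obtain ⟨k, hk⟩ := hint y hyz
    exact ⟨-k, by simp [hk], by simp [hp]⟩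
  · obtain ⟨k, hk⟩ := hint y hyz
    refine ⟨-(2 * k), by rw [mul_div_assoc, hk]; push_cast; ring, ?_⟩
    push_cast
    rw [show (2 : ZMod 2) = 0 from rfl]
    ring

theorem IsAnisoReflexion.parityLattice_le (hr : IsAnisoReflexion z w w') :
    parityLattice w' ≤ parityLattice w := by
  obtain ⟨hz, hzz, hp, -, hb⟩ := hr
  refine Submodule.span_le.mpr ?_
  rintro _ ⟨y, rfl⟩
  obtain ⟨d, hd, hdp⟩ := hz.exists_int_of_cartan_ne_zero hzz y
  have : (w'.b y, w'.p y) = (w.b y, w.p y) - d • (w.b z, w.p z) := by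
    ext1
    · simp [hb, hd, Int.cast_smul_eq_zsmul]
    · simp [hp, zsmul_eq_mul, hdp]
  change (w'.b y, w'.p y) ∈ parityLattice w
  rw [this]
  exact sub_mem (mem_parityLattice w y) (Submodule.smul_mem _ _ (mem_parityLattice w z))

theorem IsIsoReflexion.parityLattice_le (hr : IsIsoReflexion z w w') :
    parityLattice w' ≤ parityLattice w := by
  have hpz := hr.1.p_eq_one hr.2.1
  obtain ⟨-, -, -, hbz, hpz', hy⟩ := hr
  refine Submodule.span_le.mpr ?_
  rintro _ ⟨y, rfl⟩
  rw [SetLike.mem_coe]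
  by_cases hyz : y = z
  · subst hyz
    convert neg_mem (mem_parityLattice w y) using 1
    simp [hbz, hpz', ZMod.neg_eq_self_mod_two]
  by_cases h : cartan w z y = 0
  · obtain ⟨-, hb, hp⟩ := (hy y hyz).1 h
    simpa [hb, hp] using mem_parityLattice w y
  · obtain ⟨-, hb, hp⟩ := (hy y hyz).2 h
    convert add_mem (mem_parityLattice w y) (mem_parityLattice w z) using 1
    simp [hb, hp, hpz]

theorem parityLattice_le_of_mem_skeleton (hu : u ∈ Skeleton v) :
    parityLattice u ≤ parityLattice v := by
  obtain ⟨ms, hpath⟩ := hu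
  induction hpath with
  | nil => exact le_rfl
  | cons hr _ ih =>
    exact ih.trans (hr.elim IsAnisoReflexion.parityLattice_le IsIsoReflexion.parityLattice_le)

theorem rootParity_eq [Fintype X] (hu : u ∈ Skeleton v) (hx : Reflectable u x)
    (hxx : cartan u x x ≠ 0) : rootParity v (u.b x) = u.p x := by
  have hex : ∃ u' x', u' ∈ Skeleton v ∧ Reflectable u' x' ∧ cartan u' x' x' ≠ 0 ∧
      u'.b x' = u.b x := ⟨u, x, hu, hx, hxx, rfl⟩
  obtain ⟨hu', -, -, hb⟩ := hex.choose_spec.choose_spec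
  rw [rootParity, dif_pos hex]
  have hmem := parityLattice_le_of_mem_skeleton hu' (mem_parityLattice _ hex.choose_spec.choose)
  rw [hb] at hmem
  exact eq_of_mem_parityLattice hmem (parityLattice_le_of_mem_skeleton hu (mem_parityLattice u x))

theorem piSet_eq_sigmaPr (h : ∀ α ∈ SigmaPr v, rootParity v α = 0) : piSet v = SigmaPr v := by
  ext α
  simp only [piSet, Set.mem_union, Set.mem_ofPred_eq]
  constructor
  · rintro (⟨hα, -⟩ | ⟨β, hβ, hodd, -⟩)
    · exact hα
    · exact absurd (hodd.symm.trans (h β hβ)) one_ne_zero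
  · exact fun hα => Or.inl ⟨hα, h α hα⟩

end Parity

section CompleteOddIsotropic

variable {X : Type*} {H : Type*} [AddCommGroup H] [Module ℂ H] {x y : X} {u v : RootDatum X H}

structure IsCompleteOddIsotropic (v : RootDatum X H) : Prop where
  p_eq_one : ∀ x, v.p x = 1
  cartan_self : ∀ x, cartan v x x = 0
  cartan_ne_zero : ∀ x y, x ≠ y → cartan v x y ≠ 0

namespace IsCompleteOddIsotropic

variable (hv : IsCompleteOddIsotropic v)
include hv

theorem reflectable (x : X) : Reflectable v x := Or.inl ⟨hv.cartan_self x, hv.p_eq_one x⟩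

variable [Fintype X]

theorem isIsoReflexion (x : X) : IsIsoReflexion x v (isoReflexion v x) :=
  isIsoReflexion_isoReflexion (hv.reflectable x) (hv.cartan_self x)

theorem b_isoReflexion_of_ne (hyx : y ≠ x) : (isoReflexion v x).b y = v.b y + v.b x :=
  (hv.isIsoReflexion x).b_of_cartan_ne_zero hyx (hv.cartan_ne_zero x y hyx.symm)

theorem p_isoReflexion : (isoReflexion v x).p y = if y = x then 1 else 0 := by
  split_ifs with hyx
  · simp [isoReflexion, hyx, hv.p_eq_one]
  · rw [(hv.isIsoReflexion x).p_of_cartan_ne_zero hyx (hv.cartan_ne_zero x y (Ne.symm hyx)),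
      hv.p_eq_one, CharTwo.add_self_eq_zero]

theorem cartan_isoReflexion_self_of_ne (hyx : y ≠ x) :
    cartan (isoReflexion v x) y y = 2 * cartan v y x := by
  have hxy := hv.cartan_ne_zero x y hyx.symm
  rw [(hv.isIsoReflexion x).cartan_of_ne hyx hyx hxy hxy, hv.cartan_self, div_mul_cancel₀ _ hxy]
  ring

theorem cartan_isoReflexion_self_ne_zero (hyx : y ≠ x) : cartan (isoReflexion v x) y y ≠ 0 := by
  rw [hv.cartan_isoReflexion_self_of_ne hyx]
  exact mul_ne_zero two_ne_zero (hv.cartan_ne_zero y x hyx)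

/-- The only isotropic node of `r_x v` is `x`, and it leads back to `v`. -/
theorem spine_eq : Spine v = insert v (Set.range (isoReflexion v)) := by
  refine (spine_subset_of_isIsoReflexion_mem (Set.mem_insert _ _) ?_).antisymm
    (Set.insert_subset ⟨[], .nil _⟩ (Set.range_subset_iff.mpr fun x =>
      (hv.isIsoReflexion x).mem_spine))
  rintro w (rfl | ⟨x, rfl⟩) z w' hr
  · exact Or.inr ⟨z, hr.eq_isoReflexion.symm⟩
  · by_cases hzx : z = x
    · subst hzx
      exact Or.inl (hr.eq_isoReflexion.trans (hv.isIsoReflexion z).symm.eq_isoReflexion.symm)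
    · exact absurd hr.2.1 (hv.cartan_isoReflexion_self_ne_zero hzx)

theorem ncard_spine [Nontrivial X] : (Spine v).ncard = Fintype.card X + 1 := by
  have hinj : Function.Injective (isoReflexion v) := fun x y hxy => by
    have := congr_fun (congr_arg RootDatum.p hxy) x
    rw [hv.p_isoReflexion, hv.p_isoReflexion] at this
    simpa using this
  have hv_not_mem : v ∉ Set.range (isoReflexion v) := by
    rintro ⟨x, hx⟩
    obtain ⟨y, hyx⟩ := exists_ne x
    have := congr_fun (congr_arg RootDatum.p hx) y
    simp [hv.p_isoReflexion, hyx, hv.p_eq_one] at this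
  rw [hv.spine_eq, Set.ncard_insert_of_notMem hv_not_mem, Set.ncard_range_of_injective hinj,
    Nat.card_eq_fintype_card]

theorem exists_eq_isoReflexion_of_mem_spine (hu : u ∈ Spine v) (hyy : cartan u y y ≠ 0) :
    ∃ x, y ≠ x ∧ u = isoReflexion v x := by
  rw [hv.spine_eq] at hu
  obtain rfl | ⟨x, rfl⟩ := hu
  · exact absurd (hv.cartan_self y) hyy
  · refine ⟨x, fun hyx => hyy ?_, rfl⟩
    rw [hyx, (hv.isIsoReflexion x).cartan_self_left, hv.cartan_self, neg_zero]

theorem reflectable_isoReflexion (hyx : y ≠ x)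
    (h : ∀ z, z ≠ x → z ≠ y →
      ∃ k : ℕ, 1 + cartan v y z / cartan v y x + cartan v x z / cartan v x y = -k) :
    Reflectable (isoReflexion v x) y := by
  have hxy := hv.cartan_ne_zero x y hyx.symm
  have hyx' := hv.cartan_ne_zero y x hyx
  refine Or.inr (Or.inl ⟨hv.cartan_isoReflexion_self_ne_zero hyx, by
    simp [hv.p_isoReflexion, hyx], fun z hzy => ?_⟩)
  rw [hv.cartan_isoReflexion_self_of_ne hyx]
  by_cases hzx : z = x
  · subst hzx
    refine ⟨1, ?_⟩
    rw [(hv.isIsoReflexion z).cartan_self_right]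
    field_simp
    ring
  · obtain ⟨k, hk⟩ := h z hzx hzy
    refine ⟨k, ?_⟩
    rw [(hv.isIsoReflexion x).cartan_of_ne hyx hzx hxy (hv.cartan_ne_zero x z (Ne.symm hzx)),
      ← hk]
    field_simp
    ring

theorem sigmaPr_eq (hrefl : ∀ x y, y ≠ x → Reflectable (isoReflexion v x) y) :
    SigmaPr v = {α | ∃ x y, y ≠ x ∧ v.b y + v.b x = α} := by
  ext α
  constructor
  · rintro ⟨u, y, hu, -, hyy, rfl⟩
    obtain ⟨x, hyx, rfl⟩ := hv.exists_eq_isoReflexion_of_mem_spine hu hyy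
    exact ⟨x, y, hyx, (hv.b_isoReflexion_of_ne hyx).symm⟩
  · rintro ⟨x, y, hyx, rfl⟩
    exact ⟨_, y, (hv.isIsoReflexion x).mem_spine, hrefl x y hyx,
      hv.cartan_isoReflexion_self_ne_zero hyx, hv.b_isoReflexion_of_ne hyx⟩

theorem rootParity_of_mem_sigmaPr {α : Module.Dual ℂ H} (hα : α ∈ SigmaPr v) :
    rootParity v α = 0 := by
  obtain ⟨u, y, hu, hy, hyy, rfl⟩ := hα
  obtain ⟨x, hyx, rfl⟩ := hv.exists_eq_isoReflexion_of_mem_spine hu hyy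
  rw [rootParity_eq (spine_subset_skeleton hu) hy hyy, hv.p_isoReflexion, if_neg hyx]

theorem piSet_eq : piSet v = SigmaPr v :=
  piSet_eq_sigmaPr fun _ hα => hv.rootParity_of_mem_sigmaPr hα

end IsCompleteOddIsotropic

end CompleteOddIsotropic

theorem range_fin_three {α : Type*} (f : Fin 3 → α) : Set.range f = {f 0, f 1, f 2} := by
  rw [Fin.range_fin_succ, Fin.range_fin_succ, Set.range_unique]
  rfl

theorem setOf_add_of_ne_fin_three {M : Type*} [AddCommGroup M] (β : Fin 3 → M) :
    {α | ∃ x y : Fin 3, y ≠ x ∧ β y + β x = α} =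
      {(β 0 + β 1 + β 2) - β 0, (β 0 + β 1 + β 2) - β 1, (β 0 + β 1 + β 2) - β 2} := by
  ext α
  simp only [Set.mem_ofPred_eq, Set.mem_insert_iff, Set.mem_singleton_iff]
  constructor
  · rintro ⟨x, y, hyx, rfl⟩
    fin_cases x <;> fin_cases y <;>
      simp only [Fin.zero_eta, Fin.mk_one, Fin.reduceFinMk] at hyx ⊢ <;>
      first
      | exact absurd rfl hyx
      | (left; abel1)
      | (right; left; abel1)
      | (right; right; abel1)
  · rintro (rfl | rfl | rfl)
    exacts [⟨1, 2, by decide, by abel⟩, ⟨0, 2, by decide, by abel⟩,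
      ⟨0, 1, by decide, by abel⟩]

theorem stmt11_general {H : Type*} [AddCommGroup H] [Module ℂ H]
    (m n t : ℕ) (a b c : ℂ) (ha : a ≠ 0) (hb : b ≠ 0) (hc : c ≠ 0)
    (hra : 1 + a + 1 / c = -(m : ℂ)) (hrb : 1 + b + 1 / a = -(n : ℂ))
    (hrc : 1 + c + 1 / b = -(t : ℂ))
    (v : RootDatum (Fin 3) H) (hp : ∀ i, v.p i = 1)
    (h00 : cartan v 0 0 = 0) (h01 : cartan v 0 1 = a) (h02 : cartan v 0 2 = 1)
    (h10 : cartan v 1 0 = 1) (h11 : cartan v 1 1 = 0) (h12 : cartan v 1 2 = b)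
    (h20 : cartan v 2 0 = c) (h21 : cartan v 2 1 = 1) (h22 : cartan v 2 2 = 0) :
    (∀ i, Reflectable v i ∧ cartan v i i = 0) ∧
    ∃ v₁ v₂ v₃ : RootDatum (Fin 3) H,
      IsIsoReflexion 0 v v₁ ∧ IsIsoReflexion 1 v v₂ ∧ IsIsoReflexion 2 v v₃ ∧
      Spine v = {v, v₁, v₂, v₃} ∧ (Spine v).ncard = 4 ∧
      Set.range v₁.b =
        {-v.b 0, (v.b 0 + v.b 1 + v.b 2) - v.b 1, (v.b 0 + v.b 1 + v.b 2) - v.b 2} ∧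
      Set.range v₂.b =
        {-v.b 1, (v.b 0 + v.b 1 + v.b 2) - v.b 0, (v.b 0 + v.b 1 + v.b 2) - v.b 2} ∧
      Set.range v₃.b =
        {-v.b 2, (v.b 0 + v.b 1 + v.b 2) - v.b 0, (v.b 0 + v.b 1 + v.b 2) - v.b 1} ∧
      SigmaPr v = {(v.b 0 + v.b 1 + v.b 2) - v.b 0, (v.b 0 + v.b 1 + v.b 2) - v.b 1,
                   (v.b 0 + v.b 1 + v.b 2) - v.b 2} ∧
      piSet v = {(v.b 0 + v.b 1 + v.b 2) - v.b 0, (v.b 0 + v.b 1 + v.b 2) - v.b 1,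
                 (v.b 0 + v.b 1 + v.b 2) - v.b 2} := by
  have hv : IsCompleteOddIsotropic v := ⟨hp, fun x => by fin_cases x <;> assumption,
    fun x y hxy => by fin_cases x <;> fin_cases y <;> simp_all⟩
  have hrefl : ∀ x y, y ≠ x → Reflectable (isoReflexion v x) y := by
    intro x y hyx
    refine hv.reflectable_isoReflexion hyx fun z hzx hzy => ?_
    fin_cases x <;> fin_cases y <;> fin_cases z <;> simp at hyx hzx hzy ⊢ <;>
      simp only [h01, h02, h10, h12, h20, h21] <;>
      first
      | exact ⟨m, by linear_combination hra⟩
      | exact ⟨n, by linear_combination hrb⟩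
      | exact ⟨t, by linear_combination hrc⟩
  have hb : ∀ x y : Fin 3, y ≠ x → (isoReflexion v x).b y = v.b y + v.b x :=
    fun _ _ => hv.b_isoReflexion_of_ne
  refine ⟨fun i => ⟨hv.reflectable i, hv.cartan_self i⟩, _, _, _, hv.isIsoReflexion 0,
    hv.isIsoReflexion 1, hv.isIsoReflexion 2, ?_, ?_, ?_, ?_, ?_, ?_, ?_⟩
  · rw [hv.spine_eq, range_fin_three]
  · rw [hv.ncard_spine, Fintype.card_fin]
  · rw [range_fin_three, b_isoReflexion_self, hb 0 1 (by decide), hb 0 2 (by decide),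
      Set.pair_comm]
    congr 3 <;> abel
  · rw [range_fin_three, b_isoReflexion_self, hb 1 0 (by decide), hb 1 2 (by decide),
      Set.insert_comm, Set.pair_comm]
    congr 3 <;> abel
  · rw [range_fin_three, b_isoReflexion_self, hb 2 0 (by decide), hb 2 1 (by decide),
      Set.pair_comm, Set.insert_comm, Set.pair_comm]
    congr 3 <;> abel
  · rw [hv.sigmaPr_eq hrefl, setOf_add_of_ne_fin_three]
  · rw [hv.piSet_eq, hv.sigmaPr_eq hrefl, setOf_add_of_ne_fin_three]

/-- For the component `Q^±(m,n,t)`: all three `x_i` are reflectable at `v`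
and isotropic, the spine consists of exactly four vertices `{v, v₁, v₂, v₃}` with
`v_i = r_{x_i}(v)`, `Σ_{v_i} = {-β_i} ∪ {α_j : j ≠ i}`, and `Σ_pr = π = {α_1, α_2, α_3}`. -/
theorem stmt11 {H : Type*} [AddCommGroup H] [Module ℂ H] [FiniteDimensional ℂ H]
    (m n t : ℕ) (hm : 0 < m) (hn : 0 < n) (ht : 0 < t) (hmnt : 1 < m * n * t)
    (a b c : ℂ) (ha : a ≠ 0) (hb : b ≠ 0) (hc : c ≠ 0)
    (hra : 1 + a + 1 / c = -(m : ℂ)) (hrb : 1 + b + 1 / a = -(n : ℂ))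
    (hrc : 1 + c + 1 / b = -(t : ℂ))
    (v : RootDatum (Fin 3) H) (hdim : Module.finrank ℂ H = 3)
    (hp : ∀ i, v.p i = 1)
    (h00 : cartan v 0 0 = 0) (h01 : cartan v 0 1 = a) (h02 : cartan v 0 2 = 1)
    (h10 : cartan v 1 0 = 1) (h11 : cartan v 1 1 = 0) (h12 : cartan v 1 2 = b)
    (h20 : cartan v 2 0 = c) (h21 : cartan v 2 1 = 1) (h22 : cartan v 2 2 = 0) :
    (∀ i, Reflectable v i ∧ cartan v i i = 0) ∧
    ∃ v₁ v₂ v₃ : RootDatum (Fin 3) H,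
      IsIsoReflexion 0 v v₁ ∧ IsIsoReflexion 1 v v₂ ∧ IsIsoReflexion 2 v v₃ ∧
      Spine v = {v, v₁, v₂, v₃} ∧ (Spine v).ncard = 4 ∧
      Set.range v₁.b =
        {-v.b 0, (v.b 0 + v.b 1 + v.b 2) - v.b 1, (v.b 0 + v.b 1 + v.b 2) - v.b 2} ∧
      Set.range v₂.b =
        {-v.b 1, (v.b 0 + v.b 1 + v.b 2) - v.b 0, (v.b 0 + v.b 1 + v.b 2) - v.b 2} ∧
      Set.range v₃.b =
        {-v.b 2, (v.b 0 + v.b 1 + v.b 2) - v.b 0, (v.b 0 + v.b 1 + v.b 2) - v.b 1} ∧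
      SigmaPr v = {(v.b 0 + v.b 1 + v.b 2) - v.b 0, (v.b 0 + v.b 1 + v.b 2) - v.b 1,
                   (v.b 0 + v.b 1 + v.b 2) - v.b 2} ∧
      piSet v = {(v.b 0 + v.b 1 + v.b 2) - v.b 0, (v.b 0 + v.b 1 + v.b 2) - v.b 1,
                 (v.b 0 + v.b 1 + v.b 2) - v.b 2} :=
  stmt11_general m n t a b c ha hb hc hra hrb hrc v hp h00 h01 h02 h10 h11 h12 h20 h21 h22

end KMS
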